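/- arXiv:2209.12088 — 8 statements merged into one kernel-verified Lean document; each statement's English description precedes it below -/
import Mathlib

section
/- Let A be a set, let n, m be natural numbers with 0 < m and 2*m < n, and let u : (Fin n → A) → A be an exact-m-majority operation on A. Define t : A → A → A → A by t(x, y, z) = u applied to the n-tuple whose first m coordinates equal x, whose next n − 2m coordinates equal y, and whose last m coordinates equal z. Then t is a Maltsev operation, i.e. t(x, z, z) = x and t(x, x, z) = z for all x, z ∈ A. -/
lemma card_lt (n m : ℕ) (h : m ≤ n) : ({i : Fin n | (i : ℕ) < m}).ncard = m := by
  rw [Set.ncard_eq_toFinset_card']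
  simp only [Set.toFinset_setOf]
  have : Finset.filter (fun x : Fin n => (x : ℕ) < m) Finset.univ
      = Finset.image (Fin.castLE h) Finset.univ := by
    ext x
    simp only [Finset.mem_filter, Finset.mem_univ, true_and, Finset.mem_image, exists_true_left]
    constructor
    · intro hx; exact ⟨⟨x, hx⟩, rfl⟩
    · rintro ⟨i, rfl⟩; exact i.isLt
  rw [this, Finset.card_image_of_injective _ (Fin.castLE_injective h)]
  simp

lemma card_ge (n m : ℕ) (h : m ≤ n) : ({i : Fin n | ¬ (i : ℕ) < n - m}).ncard = m := by
  rw [Set.ncard_eq_toFinset_card']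
  simp only [Set.toFinset_setOf]
  have : Finset.filter (fun x : Fin n => ¬ (x : ℕ) < n - m) Finset.univ
      = Finset.image (fun i : Fin m => (⟨n - m + i, by omega⟩ : Fin n)) Finset.univ := by
    ext x
    simp only [Finset.mem_filter, Finset.mem_univ, true_and, Finset.mem_image, exists_true_left]
    constructor
    · intro hx
      refine ⟨⟨x - (n - m), by omega⟩, ?_⟩
      ext; simp; omega
    · rintro ⟨i, rfl⟩; simp
  rw [this, Finset.card_image_of_injective _ ?_]
  · simp
  · intro a b hab
    have := congrArg Fin.val hab
    simp at this
    exact Fin.ext this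


/-- An `n`-ary operation `u` on `A` is an exact-`m`-majority operation if it is
idempotent and returns `a` whenever every argument equals `a` or `b` and exactly
`m` arguments equal `a`. -/
def IsExactMajorityOp {A : Type*} (n m : ℕ) (u : (Fin n → A) → A) : Prop :=
  (∀ a : A, u (fun _ => a) = a) ∧
  ∀ (a b : A) (x : Fin n → A), (∀ i, x i = a ∨ x i = b) →
    {i : Fin n | x i = a}.ncard = m → u x = a

theorem stmt0 {A : Type*} (n m : ℕ) (hm : 0 < m) (hn : 2 * m < n)
    (u : (Fin n → A) → A) (hu : IsExactMajorityOp n m u)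
    (t : A → A → A → A)
    (ht : ∀ x y z : A,
      t x y z = u (fun i => if (i : ℕ) < m then x else if (i : ℕ) < n - m then y else z)) :
    ∀ x z : A, t x z z = x ∧ t x x z = z := by
  obtain ⟨hid, hmaj⟩ := hu
  have hmn : m ≤ n := by omega
  intro x z
  constructor
  · rcases eq_or_ne x z with rfl | hxz
    · rw [ht]; simpa using hid x
    · rw [ht]
      apply hmaj x z
      · intro i
        by_cases h1 : (i : ℕ) < m <;> by_cases h2 : (i : ℕ) < n - m <;> simp [h1, h2]
      · have : {i : Fin n | (if (i : ℕ) < m then x else if (i : ℕ) < n - m then z else z) = x}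
            = {i : Fin n | (i : ℕ) < m} := by
          ext i
          by_cases h1 : (i : ℕ) < m <;> by_cases h2 : (i : ℕ) < n - m <;>
            simp [h1, h2, hxz, Ne.symm hxz]
        rw [this]; exact card_lt n m hmn
  · rcases eq_or_ne x z with rfl | hxz
    · rw [ht]; simpa using hid x
    · rw [ht]
      apply hmaj z x
      · intro i
        by_cases h1 : (i : ℕ) < m <;> by_cases h2 : (i : ℕ) < n - m <;> simp [h1, h2]
      · have : {i : Fin n | (if (i : ℕ) < m then x else if (i : ℕ) < n - m then x else z) = z}
            = {i : Fin n | ¬ (i : ℕ) < n - m} := by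
          ext i
          by_cases h1 : (i : ℕ) < m <;> by_cases h2 : (i : ℕ) < n - m <;>
            simp [h1, h2, hxz, Ne.symm hxz] <;> omega
        rw [this]; exact card_ge n m hmn
end

section
/- Let A be a set, let n, m, k be natural numbers with 0 < m ≤ n and 0 < k, and suppose k divides both m and n. If A has an n-ary exact-m-majority operation, then A has an (n/k)-ary exact-(m/k)-majority operation; explicitly, if u is an n-ary exact-m-majority operation, then the operation t : (Fin (n/k) → A) → A defined by t(y) = u(x), where x assigns to the i-th coordinate the value y(⌊i/k⌋) (so that each argument of t is repeated k times among the arguments of u), is an exact-(m/k)-majority operation. -/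
theorem Set.ncard_preimage_of_fst_equiv {α β γ : Type*} [Finite β] [Finite γ]
    (e : β × γ ≃ α) {f : α → β} (hf : ∀ x, (e.symm x).1 = f x) (s : Set β) :
    (f ⁻¹' s).ncard = s.ncard * Nat.card γ := by
  have hpre : f ⁻¹' s = e.symm ⁻¹' (s ×ˢ univ) := by ext x; simp [hf]
  rw [hpre, ncard_preimage_of_injective_subset_range e.symm.injective (by simp),
    ← Nat.card_coe_set_eq, Nat.card_congr (Equiv.Set.prod _ _), Nat.card_prod, Nat.card_univ,
    Nat.card_coe_set_eq]

theorem stmt2_general {A : Type*} (n m k : ℕ)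
    (hkm : k ∣ m) (hkn : k ∣ n)
    (u : (Fin n → A) → A) (hu : IsExactMajorityOp n m u) :
    IsExactMajorityOp (n / k) (m / k)
      (fun y => u (fun i => y ⟨(i : ℕ) / k, Nat.div_lt_div_of_lt_of_dvd hkn i.isLt⟩)) := by
  refine ⟨hu.1, fun a b y hy hcard => hu.2 a b _ (fun i => hy _) ?_⟩
  let e : Fin (n / k) × Fin k ≃ Fin n :=
    finProdFinEquiv.trans (finCongr (Nat.div_mul_cancel hkn))
  have hfst (i : Fin n) :
      (e.symm i).1 = ⟨i / k, Nat.div_lt_div_of_lt_of_dvd hkn i.isLt⟩ := by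
    ext; simp [e]
  have hcount := Set.ncard_preimage_of_fst_equiv e hfst {j | y j = a}
  rwa [hcard, Nat.card_fin, Nat.div_mul_cancel hkm] at hcount

theorem stmt2 {A : Type*} (n m k : ℕ) (hm : 0 < m) (hmn : m ≤ n) (hk : 0 < k)
    (hkm : k ∣ m) (hkn : k ∣ n)
    (u : (Fin n → A) → A) (hu : IsExactMajorityOp n m u) :
    IsExactMajorityOp (n / k) (m / k)
      (fun y => u (fun i => y ⟨(i : ℕ) / k, Nat.div_lt_div_of_lt_of_dvd hkn i.isLt⟩)) :=
  stmt2_general n m k hkm hkn u hu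
end

section
/- Let A be a set and let n, m be natural numbers with 0 < m < n such that n − m divides n, and set ℓ = n/(n − m). If A has an n-ary exact-m-majority operation, then A has an ℓ-ary near-unanimity operation, i.e. an operation v : (Fin ℓ → A) → A such that v(x) = a whenever b ∈ A, j : Fin ℓ, x j = b and x i = a for all i ≠ j (in particular v(a, ..., a) = a). -/
theorem stmt3 {A : Type*} (n m : ℕ) (hm : 0 < m) (hmn : m < n)
    (hdvd : (n - m) ∣ n)
    (u : (Fin n → A) → A) (hu : IsExactMajorityOp n m u) :
    ∃ v : (Fin (n / (n - m)) → A) → A,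
      ∀ (a b : A) (x : Fin (n / (n - m)) → A) (j : Fin (n / (n - m))),
        x j = b → (∀ i, i ≠ j → x i = a) → v x = a := by
  have hk0 : 0 < n - m := Nat.sub_pos_of_lt hmn
  have hlk : n / (n - m) * (n - m) = n := Nat.div_mul_cancel hdvd
  set k := n - m with hk
  set L := n / k with hLdef
  let f : Fin n → Fin L := fun i => ⟨i / k, Nat.div_lt_div_of_lt_of_dvd hdvd i.2⟩
  refine ⟨fun x => u (x ∘ f), ?_⟩
  intro a b x j hxj hxa
  by_cases hab : a = b
  · have hx : x = fun _ => a := funext fun i => by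
      by_cases h : i = j
      · rw [h, hxj, hab]
      · exact hxa i h
    rw [hx]
    exact hu.1 a
  · apply hu.2 a b
    · intro i
      by_cases h : f i = j
      · right; simp [Function.comp, h, hxj]
      · left; exact hxa _ h
    · have hset : {i : Fin n | (x ∘ f) i = a} = {i : Fin n | f i ≠ j} := by
        ext i
        simp only [Set.mem_setOf_eq, Function.comp]
        constructor
        · intro h hfj
          rw [hfj, hxj] at h
          exact hab h.symm
        · intro h
          exact hxa _ h
      have hcard : (Finset.univ.filter (fun i : Fin n => f i = j)).card = k := by
        apply Finset.card_eq_of_bijective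
          (f := fun t ht => (⟨j.val * k + t, by
            calc j.val * k + t < j.val * k + k := by omega
            _ = (j.val + 1) * k := by ring
            _ ≤ L * k := Nat.mul_le_mul_right _ j.2
            _ = n := hlk⟩ : Fin n))
        · intro i hi
          simp only [Finset.mem_filter, Finset.mem_univ, true_and] at hi
          have hdiv : (i : ℕ) / k = j.val := congrArg Fin.val hi
          refine ⟨i.val % k, Nat.mod_lt _ hk0, ?_⟩
          apply Fin.ext
          show j.val * k + i.val % k = i.val
          rw [← hdiv, Nat.mul_comm]
          exact Nat.div_add_mod i.val k
        · intro t ht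
          simp only [Finset.mem_filter, Finset.mem_univ, true_and]
          apply Fin.ext
          show (j.val * k + t) / k = j.val
          rw [Nat.mul_comm, Nat.mul_add_div hk0, Nat.div_eq_of_lt ht]
          omega
        · intro t ht t' ht' heq
          have := congrArg Fin.val heq
          simp only at this
          omega
      have hset2 : {i : Fin n | (x ∘ f) i = a}.ncard = m := by
        rw [hset]
        have : {i : Fin n | f i ≠ j}.ncard
            = (Finset.univ.filter (fun i : Fin n => ¬ f i = j)).card := by
          rw [Set.ncard_eq_toFinset_card']
          congr 1
          ext i
          simp
        rw [this]
        have hsum := Finset.card_filter_add_card_filter_not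
          (s := Finset.univ) (p := fun i : Fin n => f i = j)
        simp only [Finset.card_univ, Fintype.card_fin] at hsum
        rw [hcard] at hsum
        omega
      exact hset2
end

section
/- Let G be an additive abelian group and let q, h, m, k, n be natural numbers with q • g = 0 for all g ∈ G, with h*m ≡ 1 (mod q), and with n = m + k*q. Then the operation u : (Fin n → G) → G defined by u(x) = ∑_{i} h • (x i) is an n-ary exact-m-majority operation on G: for all a, b ∈ G and every x : Fin n → G such that the set S = {i : x i = a} has exactly m elements and x i = b for all i ∉ S, one has u x = a; moreover u(a, ..., a) = a for all a ∈ G. -/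
open Finset

theorem sum_eq_card_nsmul_add_card_nsmul_of_two_valued {ι M : Type*} [Fintype ι]
    [AddCommMonoid M] [DecidableEq M] (x : ι → M) (a b : M) (hb : ∀ i, x i ≠ a → x i = b) :
    ∑ i, x i = #{i | x i = a} • a + #{i | x i ≠ a} • b := by
  rw [← sum_filter_add_sum_filter_not univ (fun i ↦ x i = a),
    sum_congr rfl fun i hi ↦ (mem_filter.1 hi).2,
    sum_congr rfl fun i hi ↦ hb i (mem_filter.1 hi).2, sum_const, sum_const]

theorem stmt4 {G : Type*} [AddCommGroup G] (q h m k n : ℕ)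
    (hq : ∀ g : G, q • g = 0) (hhm : h * m ≡ 1 [MOD q]) (hn : n = m + k * q) :
    (∀ a : G, (∑ _i : Fin n, h • a) = a) ∧
    ∀ (a b : G) (x : Fin n → G),
      {i : Fin n | x i = a}.ncard = m → (∀ i, x i ≠ a → x i = b) →
        (∑ i : Fin n, h • x i) = a := by
  classical
  refine ⟨fun a ↦ ?_, fun a b x hcard hb ↦ ?_⟩
  · have hhn : h * n ≡ 1 [MOD q] := by
      rw [hn, mul_add, ← mul_assoc]
      exact (Nat.add_mul_mod_self_right _ _ _).trans hhm
    rw [sum_const, card_univ, Fintype.card_fin, smul_smul, mul_comm,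
      nsmul_eq_nsmul_of_modEq hhn (hq a), one_nsmul]
  · have hm : #{i | x i = a} = m := by
      rw [← hcard, Set.ncard_eq_toFinset_card']
      simp
    have hkq : #{i | x i ≠ a} = k * q := by
      have := card_filter_add_card_filter_not (s := univ) (fun i ↦ x i = a)
      simp only [card_univ, Fintype.card_fin, hm, ← ne_eq] at this
      omega
    rw [← smul_sum, sum_eq_card_nsmul_add_card_nsmul_of_two_valued x a b hb, hm, hkq,
      mul_nsmul, hq, add_zero, smul_smul, nsmul_eq_nsmul_of_modEq hhm (hq a),
      one_nsmul]
end

section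
/- Let A be a nonempty set and let n, m be natural numbers with 0 < m ≤ n and 2*m ≠ n. Then there exists an n-ary exact-m-majority operation on A, i.e. an operation u : (Fin n → A) → A such that (i) u(a, ..., a) = a for all a ∈ A, and (ii) for all a, b ∈ A and every x : Fin n → A with every x i equal to a or b and |{i : x i = a}| = m, one has u x = a. -/
theorem stmt7 {A : Type*} [Nonempty A] (n m : ℕ) (hm : 0 < m) (hmn : m ≤ n)
    (hne : 2 * m ≠ n) :
    ∃ u : (Fin n → A) → A,
      (∀ a : A, u (fun _ => a) = a) ∧
      ∀ (a b : A) (x : Fin n → A), (∀ i, x i = a ∨ x i = b) →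
        {i : Fin n | x i = a}.ncard = m → u x = a := by
  classical
  have hn : 0 < n := lt_of_lt_of_le hm hmn
  refine ⟨fun x => if h : ∃! a : A, {i : Fin n | x i = a}.ncard = m
      then h.choose else x ⟨0, hn⟩, ?_, ?_⟩
  · intro a
    by_cases hnm : n = m
    · have hex : ∃! c : A, {i : Fin n | (fun _ : Fin n => a) i = c}.ncard = m := by
        refine ⟨a, ?_, ?_⟩
        · simp only [Set.setOf_true]
          rw [Set.ncard_univ]; simp [hnm]
        · intro c hc
          by_contra hca
          have : {i : Fin n | (fun _ : Fin n => a) i = c} = ∅ := by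
            ext i; simp [Ne.symm hca]
          rw [this, Set.ncard_empty] at hc
          omega
      simp only [dif_pos hex]
      by_contra hca
      have h2 : {i : Fin n | (fun _ : Fin n => a) i = hex.choose}.ncard = m := hex.choose_spec.1
      rw [show {i : Fin n | (fun _ : Fin n => a) i = hex.choose} = ∅ by
        ext i; simp; exact fun h => hca h.symm, Set.ncard_empty] at h2
      omega
    · have hnex : ¬ ∃! c : A, {i : Fin n | (fun _ : Fin n => a) i = c}.ncard = m := by
        rintro ⟨c, hc, _⟩
        by_cases hca : c = a
        · subst hca
          have : {i : Fin n | (fun _ : Fin n => c) i = c} = Set.univ := by ext i; simp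
          rw [this, Set.ncard_univ] at hc
          simp at hc; omega
        · have : {i : Fin n | (fun _ : Fin n => a) i = c} = ∅ := by
            ext i; simp; exact fun h => hca h.symm
          rw [this, Set.ncard_empty] at hc
          omega
      simp only [dif_neg hnex]
  · intro a b x hab hcard
    have hex : ∃! c : A, {i : Fin n | x i = c}.ncard = m := by
      refine ⟨a, hcard, ?_⟩
      intro c hc
      by_contra hca
      have hne' : {i : Fin n | x i = c}.Nonempty := by
        rw [← Set.ncard_pos] at *
        omega
      obtain ⟨i, hi⟩ := hne'
      have hcb : c = b := by
        rcases hab i with h | h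
        · exact absurd (hi.symm.trans h) hca
        · exact hi.symm.trans h
      rw [← hcb] at hab
      have hab' : a ≠ c := fun h => hca h.symm
      have hcomp : {i : Fin n | x i = c} = {i : Fin n | x i = a}ᶜ := by
        ext j
        simp only [Set.mem_setOf_eq, Set.mem_compl_iff]
        constructor
        · intro h h'; exact hab' (h'.symm.trans h)
        · intro h; rcases hab j with h' | h'; exact absurd h' h; exact h'
      rw [hcomp] at hc
      have hsum := Set.ncard_add_ncard_compl {i : Fin n | x i = a}
      rw [hcard, hc, Nat.card_eq_fintype_card, Fintype.card_fin] at hsum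
      omega
    simp only [dif_pos hex]
    exact hex.unique hex.choose_spec.1 hcard
end

section
/- Let G be a group and let w be an element of the free group on Fin 6 (a 6-ary group term). Suppose that for all a, b ∈ G and every assignment v : Fin 6 → G such that every v i equals a or b and the set {i : v i = a} has exactly 2 elements, the evaluation FreeGroup.lift v w equals a. Then every element of G has order dividing 2, i.e. g * g = 1 for all g ∈ G. -/
theorem stmt8 {G : Type*} [Group G] (w : FreeGroup (Fin 6))
    (hmaj : ∀ (a b : G) (v : Fin 6 → G), (∀ i, v i = a ∨ v i = b) →
      {i : Fin 6 | v i = a}.ncard = 2 → FreeGroup.lift v w = a) :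
    ∀ g : G, g * g = 1 := by
  intro g
  by_cases hg : g = 1
  · simp [hg]
  set E : FreeGroup (Fin 6) →* Multiplicative (Fin 6 → ℤ) :=
    FreeGroup.lift (fun i => Multiplicative.ofAdd (Pi.single i 1)) with hE
  set n : Fin 6 → ℤ := Multiplicative.toAdd (E w) with hn
  have key : ∀ c : Fin 6 → ℤ,
      FreeGroup.lift (fun i => g ^ c i) w = g ^ (∑ i, c i * n i) := by
    intro c
    let inner : Multiplicative (Fin 6 → ℤ) →* Multiplicative ℤ :=
      AddMonoidHom.toMultiplicative
        (AddMonoidHom.mk' (fun x => ∑ i, c i * x i)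
          (by intro x y; simp [mul_add, Finset.sum_add_distrib]))
    let ψ : Multiplicative (Fin 6 → ℤ) →* G := (zpowersHom G g).comp inner
    have hcomp : ψ.comp E = FreeGroup.lift (fun i => g ^ c i) := by
      ext i
      simp [ψ, inner, E, zpowersHom_apply, Pi.single_apply, mul_ite,
        Finset.sum_ite_eq']
    calc FreeGroup.lift (fun i => g ^ c i) w = ψ (E w) := by
          rw [← hcomp]; rfl
      _ = g ^ (∑ i, c i * n i) := by
          simp [ψ, inner, zpowersHom_apply, hn, mul_comm]
  -- main: for a 2-set given by predicate p, g ^ (sum over p) = g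
  have main : ∀ p : Fin 6 → Bool, ({i : Fin 6 | p i}).ncard = 2 →
      g ^ (∑ i, (if p i then (1:ℤ) else 0) * n i) = g := by
    intro p hp
    have hv : (fun i => if p i then g else 1)
        = (fun i => g ^ (if p i then (1:ℤ) else 0)) := by
      funext i; split <;> simp
    have := hmaj g 1 (fun i => if p i then g else 1)
      (by intro i; by_cases h : p i <;> simp [h]) ?_
    · rw [hv, key] at this; exact this
    · have hset : {i : Fin 6 | (if p i then g else 1) = g} = {i : Fin 6 | p i} := by
        ext i
        by_cases h : p i <;> simp [h, hg, Ne.symm hg]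
      rw [hset]; exact hp
  have main2 : ∀ p : Fin 6 → Bool, ({i : Fin 6 | p i}).ncard = 2 →
      g ^ (∑ i, (if p i then (0:ℤ) else 1) * n i) = 1 := by
    intro p hp
    have hv : (fun i => if p i then (1:G) else g)
        = (fun i => g ^ (if p i then (0:ℤ) else 1)) := by
      funext i; split <;> simp
    have := hmaj 1 g (fun i => if p i then (1:G) else g)
      (by intro i; by_cases h : p i <;> simp [h]) ?_
    · rw [hv, key] at this; exact this
    · have hset : {i : Fin 6 | (if p i then (1:G) else g) = 1} = {i : Fin 6 | p i} := by
        ext i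
        by_cases h : p i <;> simp [h, hg]
      rw [hset]; exact hp
  have c2 : ({i : Fin 6 | (decide (i = 2 ∨ i = 3)) = true}).ncard = 2 := by
    have : {i : Fin 6 | (decide (i = 2 ∨ i = 3)) = true} = ({2, 3} : Set (Fin 6)) := by
      ext i; simp
    rw [this]; exact Set.ncard_pair (by decide)
  have c3 : ({i : Fin 6 | (decide (i = 4 ∨ i = 5)) = true}).ncard = 2 := by
    have : {i : Fin 6 | (decide (i = 4 ∨ i = 5)) = true} = ({4, 5} : Set (Fin 6)) := by
      ext i; simp
    rw [this]; exact Set.ncard_pair (by decide)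
  have c1 : ({i : Fin 6 | (decide (i = 0 ∨ i = 1)) = true}).ncard = 2 := by
    have : {i : Fin 6 | (decide (i = 0 ∨ i = 1)) = true} = ({0, 1} : Set (Fin 6)) := by
      ext i; simp
    rw [this]; exact Set.ncard_pair (by decide)
  have h2 := main (fun i => decide (i = 2 ∨ i = 3)) c2
  have h3 := main (fun i => decide (i = 4 ∨ i = 5)) c3
  have h4 := main2 (fun i => decide (i = 0 ∨ i = 1)) c1
  rw [Fin.sum_univ_six] at h2 h3 h4
  simp at h2 h3 h4
  have hgg : g * g = g ^ (n 2 + n 3 + (n 4 + n 5)) := by rw [zpow_add, h2, h3]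
  rw [hgg, show n 2 + n 3 + (n 4 + n 5) = n 2 + n 3 + n 4 + n 5 from by ring]
  exact h4
end

section
/- Let G be a group and let w be an element of the free group on Fin 6 (a 6-ary group term). Suppose that for all a, b ∈ G and every assignment v : Fin 6 → G such that every v i equals a or b and the set {i : v i = a} has exactly 2 elements, the evaluation FreeGroup.lift v w equals a. Then G is trivial, i.e. G has at most one element (G is a subsingleton). -/
theorem stmt9 {G : Type*} [Group G] (w : FreeGroup (Fin 6))
    (hmaj : ∀ (a b : G) (v : Fin 6 → G), (∀ i, v i = a ∨ v i = b) →
      {i : Fin 6 | v i = a}.ncard = 2 → FreeGroup.lift v w = a) :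
    Subsingleton G := by
  have key : ∀ a : G, a = 1 := by
    intro a
    by_cases ha : a = 1
    · exact ha
    · set N : (Fin 6 → ℤ) → ℤ := fun c =>
        Multiplicative.toAdd (FreeGroup.lift (fun i => Multiplicative.ofAdd (c i)) w) with hN
      have key1 : ∀ c : Fin 6 → ℤ, FreeGroup.lift (fun i => a ^ c i) w = a ^ N c := by
        intro c
        have h : FreeGroup.lift (fun i => a ^ c i)
            = (zpowersHom G a).comp (FreeGroup.lift (fun i => Multiplicative.ofAdd (c i))) := by
          apply FreeGroup.ext_hom
          intro i
          simp
        rw [h]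
        simp [hN]
      have key2 : ∀ c d : Fin 6 → ℤ, N (c + d) = N c + N d := by
        intro c d
        have h : FreeGroup.lift (fun i => Multiplicative.ofAdd (c i + d i))
            = FreeGroup.lift (fun i => Multiplicative.ofAdd (c i))
              * FreeGroup.lift (fun i => Multiplicative.ofAdd (d i)) := by
          apply FreeGroup.ext_hom
          intro i
          simp [ofAdd_add]
        simp only [hN, Pi.add_apply, h, MonoidHom.mul_apply, toAdd_mul]
      set χ : Fin 6 → (Fin 6 → ℤ) := fun i j => if j = i then 1 else 0 with hχ
      have hχval : ∀ i j k : Fin 6, i ≠ j →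
          (χ i + χ j) k = if k = i ∨ k = j then 1 else 0 := by
        intro i j k hij
        by_cases h1 : k = i
        · subst h1
          simp [hχ, hij]
        · by_cases h2 : k = j
          · subst h2
            simp [hχ, h1, Ne.symm hij]
          · simp [hχ, h1, h2]
      have hpair : ∀ i j : Fin 6, i ≠ j → a ^ (N (χ i) + N (χ j)) = a := by
        intro i j hij
        rw [← key2]
        have hv : FreeGroup.lift (fun k => a ^ (χ i + χ j) k) w = a := by
          apply hmaj a 1
          · intro k
            rw [hχval i j k hij]
            by_cases h : k = i ∨ k = j
            · left; simp [h]
            · right; simp [h]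
          · have hset : {k : Fin 6 | a ^ (χ i + χ j) k = a} = {i, j} := by
              ext k
              rw [Set.mem_setOf_eq, hχval i j k hij]
              constructor
              · intro h
                by_contra hk
                simp only [Set.mem_insert_iff, Set.mem_singleton_iff] at hk
                push_neg at hk
                rw [if_neg (by tauto)] at h
                simp at h
                exact ha h.symm
              · intro hk
                simp only [Set.mem_insert_iff, Set.mem_singleton_iff] at hk
                rw [if_pos hk]
                simp
            rw [hset]
            exact Set.ncard_pair hij
        rw [key1] at hv
        exact hv
      have h4 : a ^ (N (χ 0) + N (χ 1) + (N (χ 2) + N (χ 3))) = 1 := by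
        rw [← key2, ← key2, ← key2]
        set c : Fin 6 → ℤ := χ 0 + χ 1 + (χ 2 + χ 3) with hc
        have hcval : ∀ k : Fin 6, c k = if k = 4 ∨ k = 5 then 0 else 1 := by
          intro k
          fin_cases k <;> simp [hc, hχ]
        have hv : FreeGroup.lift (fun k => a ^ c k) w = 1 := by
          apply hmaj 1 a
          · intro k
            rw [hcval k]
            by_cases h : k = 4 ∨ k = 5
            · left; simp [h]
            · right; simp [h]
          · have hset : {k : Fin 6 | a ^ c k = 1} = {4, 5} := by
              ext k
              rw [Set.mem_setOf_eq, hcval k]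
              constructor
              · intro h
                by_contra hk
                simp only [Set.mem_insert_iff, Set.mem_singleton_iff] at hk
                push_neg at hk
                rw [if_neg (by tauto)] at h
                simp at h
                exact ha h
              · intro hk
                simp only [Set.mem_insert_iff, Set.mem_singleton_iff] at hk
                rw [if_pos hk]
                simp
            rw [hset]
            exact Set.ncard_pair (by decide)
        rw [key1] at hv
        exact hv
      -- now the arithmetic
      set m : Fin 6 → ℤ := fun i => N (χ i) with hm
      have h01 : a ^ (m 0 + m 1) = a := hpair 0 1 (by decide)
      have h02 : a ^ (m 0 + m 2) = a := hpair 0 2 (by decide)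
      have h12 : a ^ (m 1 + m 2) = a := hpair 1 2 (by decide)
      have h23 : a ^ (m 2 + m 3) = a := hpair 2 3 (by decide)
      have hsq : a * a = 1 := by
        calc a * a = a ^ (m 0 + m 1) * a ^ (m 2 + m 3) := by rw [h01, h23]
        _ = a ^ (m 0 + m 1 + (m 2 + m 3)) := (zpow_add a _ _).symm
        _ = 1 := h4
      have hcube : a * a * a = 1 := by
        calc a * a * a = a ^ (m 0 + m 1) * a ^ (m 0 + m 2) * a ^ (m 1 + m 2) := by
              rw [h01, h02, h12]
        _ = a ^ (m 0 + m 1 + (m 0 + m 2) + (m 1 + m 2)) := by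
              rw [zpow_add a (m 0 + m 1 + (m 0 + m 2)), zpow_add a (m 0 + m 1)]
        _ = (a * a) ^ (m 0 + m 1 + m 2) := by
              rw [← zpow_two]
              rw [← zpow_mul]
              ring_nf
        _ = 1 := by rw [hsq, one_zpow]
      have : a = 1 := by
        have := hcube
        rw [hsq, one_mul] at this
        exact this
      exact this
  exact ⟨fun x y => by rw [key x, key y]⟩
end

section
/- Let A be a set and let n, m be natural numbers with n ≥ 3 and 0 < m < n, and suppose A has an n-ary exact-m-majority operation. Then A admits a directed Gumm sequence of ternary operations: there exist a natural number ℓ ≥ 2 and ternary operations d₁, ..., d_{ℓ−1}, q on A such that for all x, y, z ∈ A: d₁(x, x, z) = x; dᵢ(x, y, x) = x for all 1 ≤ i ≤ ℓ−1; dᵢ(x, z, z) = d_{i+1}(x, x, z) for all 1 ≤ i < ℓ−1; d_{ℓ−1}(x, z, z) = q(x, z, z); and q(x, x, z) = z. -/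
/-- Cardinality of an interval in `Fin n`. -/
lemma ncard_Ico_fin (n a b : ℕ) (hab : a ≤ b) (hbn : b ≤ n) :
    ({p : Fin n | a ≤ (p : ℕ) ∧ (p : ℕ) < b} : Set (Fin n)).ncard = b - a := by
  rw [← Nat.card_coe_set_eq]
  have e : {p : Fin n // a ≤ (p : ℕ) ∧ (p : ℕ) < b} ≃ Fin (b - a) :=
    { toFun := fun s => ⟨(s.1 : ℕ) - a, by have := s.2; omega⟩
      invFun := fun j => ⟨⟨a + (j : ℕ), by have := j.2; omega⟩, by
        refine ⟨by simp, ?_⟩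
        have := j.2; simp; omega⟩
      left_inv := fun s => by
        ext
        have := s.2
        simp
        omega
      right_inv := fun j => by
        ext
        simp }
  exact (Nat.card_congr e).trans (by simp)

lemma ncard_compl_Ico_fin (n a b : ℕ) (hab : a ≤ b) (hbn : b ≤ n) :
    ({p : Fin n | (p : ℕ) < a ∨ b ≤ (p : ℕ)} : Set (Fin n)).ncard = n - (b - a) := by
  have hset : ({p : Fin n | (p : ℕ) < a ∨ b ≤ (p : ℕ)} : Set (Fin n)) =
      ({p : Fin n | a ≤ (p : ℕ) ∧ (p : ℕ) < b} : Set (Fin n))ᶜ := by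
    ext p; simp; omega
  have h1 := ncard_Ico_fin n a b hab hbn
  have h2 := Set.ncard_add_ncard_compl ({p : Fin n | a ≤ (p : ℕ) ∧ (p : ℕ) < b} : Set (Fin n))
  rw [Nat.card_eq_fintype_card, Fintype.card_fin] at h2
  rw [hset]
  omega

lemma ncard_Iio_fin (n b : ℕ) (hbn : b ≤ n) :
    ({p : Fin n | (p : ℕ) < b} : Set (Fin n)).ncard = b := by
  have hset : ({p : Fin n | (p : ℕ) < b} : Set (Fin n)) =
      ({p : Fin n | 0 ≤ (p : ℕ) ∧ (p : ℕ) < b} : Set (Fin n)) := by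
    ext p; simp
  rw [hset, ncard_Ico_fin n 0 b (by omega) hbn]
  omega

lemma ncard_Ici_fin (n b : ℕ) (hbn : b ≤ n) :
    ({p : Fin n | b ≤ (p : ℕ)} : Set (Fin n)).ncard = n - b := by
  have hset : ({p : Fin n | b ≤ (p : ℕ)} : Set (Fin n)) =
      ({p : Fin n | (p : ℕ) < 0 ∨ b ≤ (p : ℕ)} : Set (Fin n)) := by
    ext p; simp
  rw [hset, ncard_compl_Ico_fin n 0 b (by omega) hbn]
  omega

/-- The key pinning lemma: if the entries of a tuple are `a` on a set of measure `m`
and `b` off it, then `u` returns `a`. -/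
lemma pin {A : Type*} {n m : ℕ} {u : (Fin n → A) → A} (hu : IsExactMajorityOp n m u)
    (P : Fin n → Prop) (hP : ({i : Fin n | P i} : Set (Fin n)).ncard = m)
    (a b : A) (t : Fin n → A)
    (ha : ∀ i, P i → t i = a) (hb : ∀ i, ¬ P i → t i = b) :
    u t = a := by
  by_cases hab : a = b
  · have ht : t = fun _ => a := by
      funext i
      by_cases h : P i
      · exact ha i h
      · rw [hb i h, hab]
    rw [ht, hu.1]
  · apply hu.2 a b t
    · intro i
      by_cases h : P i
      · exact Or.inl (ha i h)
      · exact Or.inr (hb i h)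
    · have hset : {i : Fin n | t i = a} = {i : Fin n | P i} := by
        ext i
        simp only [Set.mem_setOf_eq]
        constructor
        · intro h
          by_contra hPi
          apply hab
          rw [← h, hb i hPi]
        · exact ha i
      rw [hset, hP]

theorem stmt11 {A : Type*} (n m : ℕ) (hn : 3 ≤ n) (hm : 0 < m) (hmn : m < n)
    (u : (Fin n → A) → A) (hu : IsExactMajorityOp n m u) :
    ∃ (ℓ : ℕ) (hℓ : 2 ≤ ℓ) (d : Fin (ℓ - 1) → A → A → A → A) (q : A → A → A → A),
      ∀ x y z : A,
        d ⟨0, by omega⟩ x x z = x ∧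
        (∀ i : Fin (ℓ - 1), d i x y x = x) ∧
        (∀ (i : Fin (ℓ - 1)) (hi : (i : ℕ) + 1 < ℓ - 1),
          d i x z z = d ⟨(i : ℕ) + 1, hi⟩ x x z) ∧
        d ⟨ℓ - 2, by omega⟩ x z z = q x z z ∧
        q x x z = z := by
  set k := n - m with hk
  have hk0 : 0 < k := by omega
  by_cases hcase : m ≤ k
  · -- Case 2m ≤ n
    refine ⟨2, by omega,
      fun _ x y z => u (fun p => if (p : ℕ) < m then x else z),
      fun x y z => u (fun p => if (p : ℕ) < m then x else if (p : ℕ) < n - m then y else z),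
      fun x y z => ?_⟩
    refine ⟨?_, ?_, ?_, ?_, ?_⟩
    · -- d 0 x x z = x
      show u (fun p => if (p : ℕ) < m then x else z) = x
      refine pin hu (fun p => (p : ℕ) < m) (ncard_Iio_fin n m (by omega)) x z _ ?_ ?_
      · intro p hp
        have hp' : (p : ℕ) < m := hp
        show (if (p : ℕ) < m then x else z) = x
        split_ifs with h <;> first | rfl | omega
      · intro p hp
        have hp' : ¬ (p : ℕ) < m := hp
        show (if (p : ℕ) < m then x else z) = z
        split_ifs with h <;> first | rfl | omega
    · -- d i x y x = x
      intro i
      show u (fun p => if (p : ℕ) < m then x else x) = x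
      have ht : (fun p : Fin n => if (p : ℕ) < m then x else x) = fun _ => x := by
        funext p
        split_ifs <;> rfl
      rw [ht, hu.1]
    · -- transitions: vacuous
      intro i hi
      omega
    · -- d 0 x z z = q x z z
      show u (fun p => if (p : ℕ) < m then x else z) =
        u (fun p => if (p : ℕ) < m then x else if (p : ℕ) < n - m then z else z)
      congr 1
      funext p
      split_ifs <;> rfl
    · -- q x x z = z
      show u (fun p => if (p : ℕ) < m then x else if (p : ℕ) < n - m then x else z) = z
      refine pin hu (fun p => n - m ≤ (p : ℕ))
        (by rw [ncard_Ici_fin n (n - m) (by omega)]; omega) z x _ ?_ ?_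
      · intro p hp
        have hp' : n - m ≤ (p : ℕ) := hp
        show (if (p : ℕ) < m then x else if (p : ℕ) < n - m then x else z) = z
        split_ifs <;> first | rfl | omega
      · intro p hp
        have hp' : ¬ n - m ≤ (p : ℕ) := hp
        show (if (p : ℕ) < m then x else if (p : ℕ) < n - m then x else z) = x
        split_ifs <;> first | rfl | omega
  · -- Case 2m > n, i.e. k < m
    have hkm : k < m := by omega
    set J := (m - 1) / k with hJdef
    have hJ1 : 1 ≤ J := by
      rw [hJdef]
      exact (Nat.one_le_div_iff hk0).2 (by omega)
    have hJk : J * k ≤ m - 1 := by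
      rw [hJdef]
      exact Nat.div_mul_le_self _ _
    have hs_le : m - J * k ≤ k := by
      have h1 : k * ((m - 1) / k) + (m - 1) % k = m - 1 := Nat.div_add_mod (m - 1) k
      rw [← hJdef] at h1
      have h2 : (m - 1) % k < k := Nat.mod_lt _ hk0
      have h3 : k * J = J * k := Nat.mul_comm k J
      omega
    have hs_pos : 1 ≤ m - J * k := by omega
    refine ⟨J + 1, by omega,
      fun i x y z => u (fun p =>
        if (p : ℕ) < m - ((i : ℕ) + 1) * k then x
        else if (p : ℕ) < m - (i : ℕ) * k then y else z),
      fun x y z => u (fun p =>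
        if (p : ℕ) < m - J * k then x else if (p : ℕ) < k then y else z),
      fun x y z => ?_⟩
    have hmul : ∀ j : ℕ, j ≤ J → j * k ≤ m - 1 := by
      intro j hj
      calc j * k ≤ J * k := Nat.mul_le_mul_right k hj
        _ ≤ m - 1 := hJk
    refine ⟨?_, ?_, ?_, ?_, ?_⟩
    · -- d 0 x x z = x
      show u (fun p => if (p : ℕ) < m - (0 + 1) * k then x
        else if (p : ℕ) < m - 0 * k then x else z) = x
      have e1 : (0 + 1) * k = k := by ring
      have e2 : 0 * k = 0 := by ring
      refine pin hu (fun p => (p : ℕ) < m) (ncard_Iio_fin n m (by omega)) x z _ ?_ ?_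
      · intro p hp
        have hp' : (p : ℕ) < m := hp
        show (if (p : ℕ) < m - (0 + 1) * k then x
          else if (p : ℕ) < m - 0 * k then x else z) = x
        split_ifs <;> first | rfl | omega
      · intro p hp
        have hp' : ¬ (p : ℕ) < m := hp
        show (if (p : ℕ) < m - (0 + 1) * k then x
          else if (p : ℕ) < m - 0 * k then x else z) = z
        split_ifs <;> first | rfl | omega
    · -- d i x y x = x
      intro i
      have e1 : ((i : ℕ) + 1) * k = (i : ℕ) * k + k := by ring
      have hle : (i : ℕ) + 1 ≤ J := i.2
      have hikm : ((i : ℕ) + 1) * k ≤ m - 1 := hmul _ hle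
      show u (fun p => if (p : ℕ) < m - ((i : ℕ) + 1) * k then x
        else if (p : ℕ) < m - (i : ℕ) * k then y else x) = x
      refine pin hu
        (fun p => (p : ℕ) < m - ((i : ℕ) + 1) * k ∨ m - (i : ℕ) * k ≤ (p : ℕ))
        (by
          rw [ncard_compl_Ico_fin n (m - ((i : ℕ) + 1) * k) (m - (i : ℕ) * k)
            (by omega) (by omega)]
          omega) x y _ ?_ ?_
      · intro p hp
        have hp' : (p : ℕ) < m - ((i : ℕ) + 1) * k ∨ m - (i : ℕ) * k ≤ (p : ℕ) := hp
        show (if (p : ℕ) < m - ((i : ℕ) + 1) * k then x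
          else if (p : ℕ) < m - (i : ℕ) * k then y else x) = x
        split_ifs <;> first | rfl | omega
      · intro p hp
        have hp' : ¬ ((p : ℕ) < m - ((i : ℕ) + 1) * k ∨ m - (i : ℕ) * k ≤ (p : ℕ)) := hp
        show (if (p : ℕ) < m - ((i : ℕ) + 1) * k then x
          else if (p : ℕ) < m - (i : ℕ) * k then y else x) = y
        split_ifs <;> first | rfl | omega
    · -- transitions
      intro i hi
      have e1 : ((i : ℕ) + 1) * k = (i : ℕ) * k + k := by ring
      have e2 : ((i : ℕ) + 1 + 1) * k = (i : ℕ) * k + k + k := by ring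
      show u (fun p => if (p : ℕ) < m - ((i : ℕ) + 1) * k then x
          else if (p : ℕ) < m - (i : ℕ) * k then z else z) =
        u (fun p => if (p : ℕ) < m - ((i : ℕ) + 1 + 1) * k then x
          else if (p : ℕ) < m - ((i : ℕ) + 1) * k then x else z)
      congr 1
      funext p
      split_ifs <;> first | rfl | omega
    · -- d (ℓ - 2) x z z = q x z z
      have eJ : (J + 1 - 2) + 1 = J := by omega
      have e1 : ((J + 1 - 2) + 1) * k = J * k := by rw [eJ]
      have e2 : (J + 1 - 2) * k + k = J * k := by rw [← e1]; ring
      show u (fun p => if (p : ℕ) < m - ((J + 1 - 2) + 1) * k then x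
          else if (p : ℕ) < m - (J + 1 - 2) * k then z else z) =
        u (fun p => if (p : ℕ) < m - J * k then x else if (p : ℕ) < k then z else z)
      congr 1
      funext p
      split_ifs <;> first | rfl | omega
    · -- q x x z = z
      show u (fun p => if (p : ℕ) < m - J * k then x
        else if (p : ℕ) < k then x else z) = z
      refine pin hu (fun p => k ≤ (p : ℕ))
        (by rw [ncard_Ici_fin n k (by omega)]; omega) z x _ ?_ ?_
      · intro p hp
        have hp' : k ≤ (p : ℕ) := hp
        show (if (p : ℕ) < m - J * k then x else if (p : ℕ) < k then x else z) = z
        split_ifs <;> first | rfl | omega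
      · intro p hp
        have hp' : ¬ k ≤ (p : ℕ) := hp
        show (if (p : ℕ) < m - J * k then x else if (p : ℕ) < k then x else z) = x
        split_ifs <;> first | rfl | omega
end
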